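/- Cauchy residue formula for the projection [·]₊: for every f ∈ F(q), one has [f]₊ = −Res_{w=0}( f̃(w)/(w−q) dw ) − Res_{w=∞}( f̃(w)/(w−q) dw ), where f̃(w) ∈ F(q)(w) is the image of f under the F-algebra embedding F(q) → F(q)(w) sending q to w, the residues are taken in the variable w over the coefficient field F(q) (Res_{w=0}(h dw) is the coefficient of w⁻¹ in the Laurent expansion of h at w = 0, and Res_{w=∞}(h dw) := −Res_{w=0}(w⁻² h(w⁻¹) dw)), and the equality holds in F(q). -/

import Mathlib

open Polynomial in
theorem algebraMap_ratFunc_eq_aeval (F : Type*) [Field F] (p : F[X]) :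
    algebraMap F[X] (RatFunc F) p = Polynomial.aeval RatFunc.X p := by
  have h : (IsScalarTower.toAlgHom F F[X] (RatFunc F)) = Polynomial.aeval (RatFunc.X (K := F)) :=
    Polynomial.algHom_ext (by simp [RatFunc.algebraMap_X])
  exact DFunLike.congr_fun h p

open Polynomial in
/-- Injectivity of `aeval X⁻¹ : F[X] → F(q)`. -/
theorem aeval_inv_injective (F : Type*) [Field F] :
    Function.Injective (Polynomial.aeval (RatFunc.X (K := F))⁻¹ : F[X] →ₐ[F] RatFunc F) := by
  rw [injective_iff_map_eq_zero]
  intro p hp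
  haveI : Invertible (RatFunc.X (K := F))⁻¹ :=
    invertibleOfNonzero (inv_ne_zero RatFunc.X_ne_zero)
  have h2 : (⅟(RatFunc.X (K := F))⁻¹) = RatFunc.X := by
    rw [invOf_eq_inv, inv_inv]
  have hp' : Polynomial.eval₂ (algebraMap F (RatFunc F)) (RatFunc.X)⁻¹ p = 0 := by
    rwa [Polynomial.aeval_def] at hp
  rw [← Polynomial.eval₂_reverse_eq_zero_iff (algebraMap F (RatFunc F)) (RatFunc.X)⁻¹ p] at hp'
  rw [h2] at hp'
  have h3 : algebraMap F[X] (RatFunc F) p.reverse = 0 := by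
    rw [algebraMap_ratFunc_eq_aeval, Polynomial.aeval_def]
    exact hp'
  have h4 : p.reverse = 0 := RatFunc.algebraMap_injective F (by simpa using h3)
  exact Polynomial.reverse_eq_zero.mp h4

noncomputable section

open scoped TensorProduct

variable (F : Type*) [Field F]

/-- The automorphism `q ↦ q⁻¹` of `F(q)`: the unique `F`-algebra map sending `q` to `q⁻¹`. -/
def qinv : RatFunc F →ₐ[F] RatFunc F :=
  IsFractionRing.liftAlgHom (aeval_inv_injective F)

/-- Coefficient of `qⁿ` in the Laurent-series expansion at `q = 0`, as an `F`-linear map. -/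
def coeffL (n : ℤ) : RatFunc F →ₗ[F] F where
  toFun h := ((h : LaurentSeries F)).coeff n
  map_add' a b := by
    rw [map_add, HahnSeries.coeff_add]
  map_smul' c a := by
    rw [Algebra.smul_def, map_mul, RatFunc.algebraMap_eq_C, ← RatFunc.algebraMap_C]
    erw [← RatFunc.coe_coe]
    rw [Polynomial.coe_C, PowerSeries.coe_C, HahnSeries.C_mul_eq_smul, HahnSeries.coeff_smul,
      RingHom.id_apply]

/-- `Res_{q=0} (h dq)`: the coefficient of `q⁻¹` in the Laurent expansion of `h` at `q = 0`. -/
def res0 (h : RatFunc F) : F := coeffL F (-1) h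

/-- `Res_{q=∞} (h dq) := −Res_{q=0} (q⁻² h(q⁻¹) dq)`. -/
def resInf (h : RatFunc F) : F := - res0 F ((RatFunc.X)⁻¹ ^ 2 * qinv F h)

variable (V : Type*) [AddCommGroup V] [Module F V]

/-- The loop space `K := F(q) ⊗_F V` of `V`-valued rational functions. -/
abbrev LoopK := RatFunc F ⊗[F] V

/-- `f(q) ↦ f(q⁻¹)` on `K`. -/
def finv : LoopK F V →ₗ[F] LoopK F V := LinearMap.rTensor V (qinv F).toLinearMap

/-- The `V`-valued coefficient of `qⁿ` in the expansion at `q = 0` of an element of `K`. -/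
def vcoeff (n : ℤ) : LoopK F V →ₗ[F] V :=
  (TensorProduct.lid F V).toLinearMap ∘ₗ LinearMap.rTensor V (coeffL F n)

/-- The loop-space form
`Ω(f,g) = −Res_{q=0}(q⁻¹ B_q(f(q⁻¹),g(q)) dq) − Res_{q=∞}(q⁻¹ B_q(f(q⁻¹),g(q)) dq)`. -/
def Omega (B : LinearMap.BilinForm F V) (f g : LoopK F V) : F :=
  - res0 F ((RatFunc.X)⁻¹ * (LinearMap.BilinForm.baseChange (RatFunc F) B) (finv F V f) g)
  - resInf F ((RatFunc.X)⁻¹ * (LinearMap.BilinForm.baseChange (RatFunc F) B) (finv F V f) g)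

/-- `K₊`: `V`-valued Laurent polynomials in `q`. -/
def Kplus : Submodule F (LoopK F V) :=
  Submodule.span F {z : LoopK F V | ∃ (n : ℤ) (v : V), z = (RatFunc.X ^ n) ⊗ₜ[F] v}

/-- `K₋`: `V`-valued rational functions regular at `q = 0` and vanishing at `q = ∞`. -/
def Kminus : Submodule F (LoopK F V) where
  carrier := {f | (∀ n : ℤ, n < 0 → vcoeff F V n f = 0) ∧
    (∀ n : ℤ, n ≤ 0 → vcoeff F V n (finv F V f) = 0)}
  add_mem' := by
    rintro a b ⟨ha1, ha2⟩ ⟨hb1, hb2⟩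
    constructor
    · intro n hn; rw [map_add, ha1 n hn, hb1 n hn, add_zero]
    · intro n hn; rw [map_add, map_add, ha2 n hn, hb2 n hn, add_zero]
  zero_mem' := by
    constructor <;> intro n hn <;> simp
  smul_mem' := by
    rintro c a ⟨ha1, ha2⟩
    constructor
    · intro n hn; rw [map_smul, ha1 n hn, smul_zero]
    · intro n hn; rw [map_smul, map_smul, ha2 n hn, smul_zero]

/-- The value at `q = 1` of a `V`-valued Laurent polynomial (the sum of its coefficients). -/
def evalOne (f : LoopK F V) : V := ∑ᶠ n : ℤ, vcoeff F V n f

/-- Scalar `K₊ ⊂ F(q)`: the Laurent polynomials. -/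
def KplusS : Submodule F (RatFunc F) :=
  Submodule.span F (Set.range fun n : ℤ => (RatFunc.X : RatFunc F) ^ n)

/-- Scalar `K₋ ⊂ F(q)`: rational functions regular at `q = 0` and vanishing at `q = ∞`. -/
def KminusS : Submodule F (RatFunc F) where
  carrier := {h | (∀ n : ℤ, n < 0 → coeffL F n h = 0) ∧
    (∀ n : ℤ, n ≤ 0 → coeffL F n (qinv F h) = 0)}
  add_mem' := by
    rintro a b ⟨ha1, ha2⟩ ⟨hb1, hb2⟩
    constructor
    · intro n hn; rw [map_add, ha1 n hn, hb1 n hn, add_zero]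
    · intro n hn; rw [map_add, map_add, ha2 n hn, hb2 n hn, add_zero]
  zero_mem' := by
    constructor <;> intro n hn <;> simp
  smul_mem' := by
    rintro c a ⟨ha1, ha2⟩
    constructor
    · intro n hn; rw [map_smul, ha1 n hn, smul_zero]
    · intro n hn; rw [map_smul, map_smul, ha2 n hn, smul_zero]

/-- The embedding `F(q) → F(q)(w)`, `q ↦ w`, on the level of polynomials. -/
def gmap : Polynomial F →+* RatFunc (RatFunc F) :=
  (algebraMap (Polynomial (RatFunc F)) (RatFunc (RatFunc F))).comp
    (Polynomial.mapRingHom (algebraMap F (RatFunc F)))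

theorem gmap_injective : Function.Injective (gmap F) :=
  (RatFunc.algebraMap_injective (RatFunc F)).comp
    (Polynomial.map_injective _ (algebraMap F (RatFunc F)).injective)

/-- The `F`-algebra embedding `F(q) → F(q)(w)` sending `q` to the new variable `w`. -/
def ftilde : RatFunc F →+* RatFunc (RatFunc F) :=
  IsFractionRing.lift (gmap_injective F)

/-!
The map `f ↦ −Res_{w=0} − Res_{w=∞}` of `f̃(w) dw / (w − q)` is `F`-linear, so it suffices to
show that it fixes `K₊` and kills `K₋`. The substitution `w ↦ w⁻¹` rewrites the residue at `∞`
of `g(w) dw / (w − c)` as `c⁻¹ Res_{w=0}(w⁻¹ g(w⁻¹) dw / (w − c⁻¹))`, while `1 / (w − c)` is a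
power series at `w = 0`. Hence on `qⁿ` exactly one of the two residues survives and equals
`−qⁿ` (the one at `0` for `n < 0`, the one at `∞` for `n ≥ 0`); and for `f ∈ K₋` both `f̃(w)` and
`w⁻¹ f̃(w⁻¹)` are regular at `w = 0`, so both residues vanish.
-/

open scoped LaurentSeries

namespace LaurentSeries

variable {R S : Type*} [Semiring R] [Semiring S]

def mapRingHom (f : R →+* S) : R⸨X⸩ →+* S⸨X⸩ where
  toFun x := x.map f
  map_zero' := HahnSeries.map_zero (f : ZeroHom R S)
  map_one' := HahnSeries.map_one f.toMonoidWithZeroHom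
  map_add' _ _ := HahnSeries.map_add (f : R →+ S)
  map_mul' _ _ := HahnSeries.map_mul (f : R →ₙ+* S)

@[simp]
lemma coeff_mapRingHom (f : R →+* S) (x : R⸨X⸩) (n : ℤ) :
    (mapRingHom f x).coeff n = f (x.coeff n) := rfl

end LaurentSeries

namespace RatFunc

variable {K : Type*} [Field K]

lemma coe_C (c : K) : ((C c : RatFunc K) : K⸨X⸩) = HahnSeries.C c := by
  simp [← algebraMap_C, ← IsScalarTower.algebraMap_apply (Polynomial K) (RatFunc K) K⸨X⸩]

lemma coe_X_zpow (n : ℤ) : ((X ^ n : RatFunc K) : K⸨X⸩) = HahnSeries.single n 1 := by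
  rw [map_zpow₀, coe_X, single_zpow n]

lemma X_sub_C_ne_zero (c : K) : (X - C c : RatFunc K) ≠ 0 := by
  rw [← algebraMap_X, ← algebraMap_C, ← map_sub]
  exact algebraMap_ne_zero (Polynomial.X_sub_C_ne_zero c)

lemma coe_inv_X_sub_C {c : K} (hc : c ≠ 0) :
    (((X - C c)⁻¹ : RatFunc K) : K⸨X⸩)
      = -HahnSeries.ofPowerSeries ℤ K (PowerSeries.invUnitsSub (Units.mk0 c hc)) := by
  rw [map_inv₀]
  refine inv_eq_of_mul_eq_one_right ?_
  have h := congrArg (HahnSeries.ofPowerSeries ℤ K)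
    (PowerSeries.invUnitsSub_mul_sub (Units.mk0 c hc))
  rw [map_mul, map_one, map_sub, HahnSeries.ofPowerSeries_C, HahnSeries.ofPowerSeries_X,
    Units.val_mk0] at h
  rw [map_sub, coe_X, coe_C]
  linear_combination h

lemma coeff_coe_inv_X_sub_C_of_neg {c : K} (hc : c ≠ 0) {n : ℤ} (hn : n < 0) :
    (((X - C c)⁻¹ : RatFunc K) : K⸨X⸩).coeff n = 0 := by
  rw [coe_inv_X_sub_C hc, HahnSeries.coeff_neg, HahnSeries.ofPowerSeries_apply,
    HahnSeries.embDomain_of_notMem_range, neg_zero]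
  rintro ⟨m, hm⟩
  have : (m : ℤ) = n := hm
  omega

lemma coeff_coe_inv_X_sub_C_natCast {c : K} (hc : c ≠ 0) (m : ℕ) :
    (((X - C c)⁻¹ : RatFunc K) : K⸨X⸩).coeff m = -(c ^ (m + 1))⁻¹ := by
  rw [coe_inv_X_sub_C hc, HahnSeries.coeff_neg, HahnSeries.ofPowerSeries_apply_coeff,
    PowerSeries.coeff_invUnitsSub, one_divp, Units.val_inv_eq_inv_val, Units.val_pow_eq_pow_val,
    Units.val_mk0]

lemma zero_le_orderTop_coe_inv_X_sub_C {c : K} (hc : c ≠ 0) :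
    0 ≤ (((X - C c)⁻¹ : RatFunc K) : K⸨X⸩).orderTop :=
  HahnSeries.le_orderTop_iff_forall.2 fun _ hn =>
    coeff_coe_inv_X_sub_C_of_neg hc (by exact_mod_cast hn)

end RatFunc

section Residues

variable {K : Type*} [Field K]

open RatFunc

lemma res0_eq_coeff (h : RatFunc K) : res0 K h = (h : K⸨X⸩).coeff (-1) := rfl

lemma res0_eq_zero_of_orderTop_nonneg {h : RatFunc K} (hh : 0 ≤ (h : K⸨X⸩).orderTop) :
    res0 K h = 0 :=
  HahnSeries.coeff_eq_zero_of_lt_orderTop ((WithTop.coe_lt_coe.2 neg_one_lt_zero).trans_le hh)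

lemma res0_div_X_sub_C_eq_zero {c : K} (hc : c ≠ 0) {g : RatFunc K}
    (hg : 0 ≤ (g : K⸨X⸩).orderTop) : res0 K (g / (X - C c)) = 0 := by
  apply res0_eq_zero_of_orderTop_nonneg
  rw [div_eq_mul_inv, map_mul, HahnSeries.orderTop_mul]
  exact add_nonneg hg (zero_le_orderTop_coe_inv_X_sub_C hc)

lemma res0_zpow_div_X_sub_C {c : K} (hc : c ≠ 0) (n : ℤ) :
    res0 K (X ^ n / (X - C c)) = if n < 0 then -c ^ n else 0 := by
  rw [res0_eq_coeff, div_eq_mul_inv, map_mul, coe_X_zpow,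
    show (-1 : ℤ) = (-1 - n) + n by ring, HahnSeries.coeff_single_mul_add, one_mul]
  split_ifs with hn
  · obtain ⟨m, hm⟩ : ∃ m : ℕ, -1 - n = m := ⟨(-1 - n).toNat, by omega⟩
    rw [hm, coeff_coe_inv_X_sub_C_natCast hc, ← zpow_natCast, ← zpow_neg, neg_inj]
    congr 1
    omega
  · exact coeff_coe_inv_X_sub_C_of_neg hc (by omega)

lemma qinv_algebraMap (p : Polynomial K) :
    qinv K (algebraMap (Polynomial K) (RatFunc K) p) = Polynomial.aeval (X : RatFunc K)⁻¹ p := by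
  rw [qinv, IsFractionRing.liftAlgHom_apply, IsFractionRing.lift_algebraMap]
  rfl

lemma qinv_X : qinv K X = X⁻¹ := by
  rw [← algebraMap_X, qinv_algebraMap, Polynomial.aeval_X, algebraMap_X]

lemma qinv_C (a : K) : qinv K (C a) = C a := by
  rw [← algebraMap_eq_C]
  exact (qinv K).commutes a

lemma inv_X_sq_mul_div_inv_X_sub_C {c : K} (hc : c ≠ 0) (u : RatFunc K) :
    (X : RatFunc K)⁻¹ ^ 2 * (u / (X⁻¹ - C c)) = -(C c⁻¹ * (X⁻¹ * u / (X - C c⁻¹))) := by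
  have hX : (X : RatFunc K) ≠ 0 := X_ne_zero
  have hC : C c ≠ 0 := (map_ne_zero _).2 hc
  have h₁ : X - (C c)⁻¹ ≠ 0 := map_inv₀ C c ▸ X_sub_C_ne_zero c⁻¹
  have key : (X : RatFunc K)⁻¹ - C c = -C c * X⁻¹ * (X - (C c)⁻¹) := by
    field_simp
    ring
  rw [key, map_inv₀]
  field_simp

lemma resInf_div_X_sub_C {c : K} (hc : c ≠ 0) (g : RatFunc K) :
    resInf K (g / (X - C c)) = c⁻¹ * res0 K (X⁻¹ * qinv K g / (X - C c⁻¹)) := by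
  rw [resInf, map_div₀, map_sub, qinv_X, qinv_C, inv_X_sq_mul_div_inv_X_sub_C hc, res0, map_neg,
    neg_neg, ← smul_eq_C_mul, map_smul, smul_eq_mul]
  rfl

def cauchyResidue (c : K) : RatFunc K →ₗ[K] K where
  toFun g := -res0 K (g / (X - C c)) - resInf K (g / (X - C c))
  map_add' g h := by
    simp only [add_div, res0, resInf, map_add, mul_add]
    ring
  map_smul' a g := by
    simp only [smul_div_assoc, res0, resInf, map_smul, mul_smul_comm, smul_eq_mul,
      RingHom.id_apply]
    ring

lemma cauchyResidue_apply (c : K) (g : RatFunc K) :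
    cauchyResidue c g = -res0 K (g / (X - C c)) - resInf K (g / (X - C c)) := rfl

lemma cauchyResidue_zpow {c : K} (hc : c ≠ 0) (n : ℤ) : cauchyResidue c (X ^ n) = c ^ n := by
  have hX : (X : RatFunc K)⁻¹ * X⁻¹ ^ n = X ^ (-n - 1) := by
    rw [inv_zpow', ← zpow_neg_one, ← zpow_add₀ X_ne_zero, neg_add_eq_sub]
  rw [cauchyResidue_apply, resInf_div_X_sub_C hc, map_zpow₀, qinv_X, hX,
    res0_zpow_div_X_sub_C hc, res0_zpow_div_X_sub_C (inv_ne_zero hc)]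
  by_cases hn : n < 0
  · rw [if_pos hn, if_neg (by omega)]
    ring
  · rw [if_neg hn, if_pos (by omega), mul_neg, ← zpow_one_add₀ (inv_ne_zero hc), inv_zpow',
      show -(1 + (-n - 1)) = n by ring]
    ring

lemma cauchyResidue_eq_zero {c : K} (hc : c ≠ 0) {g : RatFunc K}
    (h₀ : 0 ≤ (g : K⸨X⸩).orderTop) (h_inf : 1 ≤ (qinv K g : K⸨X⸩).orderTop) :
    cauchyResidue c g = 0 := by
  have h_reg : 0 ≤ ((X⁻¹ * qinv K g : RatFunc K) : K⸨X⸩).orderTop := by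
    rw [map_mul, HahnSeries.orderTop_mul, ← zpow_neg_one, coe_X_zpow,
      HahnSeries.orderTop_single one_ne_zero]
    calc (0 : WithTop ℤ) = ((-1 : ℤ) : WithTop ℤ) + 1 := rfl
      _ ≤ _ := by gcongr
  rw [cauchyResidue_apply, resInf_div_X_sub_C hc, res0_div_X_sub_C_eq_zero hc h₀,
    res0_div_X_sub_C_eq_zero (inv_ne_zero hc) h_reg, mul_zero, neg_zero, sub_zero]

end Residues

section PlusPart

open RatFunc

lemma ftilde_algebraMap (p : Polynomial F) :
    ftilde F (algebraMap (Polynomial F) (RatFunc F) p) = gmap F p :=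
  IsFractionRing.lift_algebraMap (gmap_injective F) p

lemma ftilde_X : ftilde F X = X := by
  rw [← algebraMap_X, ftilde_algebraMap, gmap, RingHom.comp_apply, Polynomial.coe_mapRingHom,
    Polynomial.map_X, algebraMap_X]

lemma ftilde_C (a : F) : ftilde F (C a) = C (C a) := by
  rw [← algebraMap_C, ftilde_algebraMap, gmap, RingHom.comp_apply, Polynomial.coe_mapRingHom,
    Polynomial.map_C, algebraMap_C, algebraMap_eq_C, algebraMap_C]

lemma qinv_ftilde (f : RatFunc F) : qinv (RatFunc F) (ftilde F f) = ftilde F (qinv F f) := by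
  suffices h : (qinv (RatFunc F) : _ →+* _).comp (ftilde F) = (ftilde F).comp (qinv F) from
    DFunLike.congr_fun h f
  refine IsLocalization.ringHom_ext (nonZeroDivisors (Polynomial F)) (Polynomial.ringHom_ext ?_ ?_)
  · intro a
    simp only [RingHom.comp_apply, RingHom.coe_coe, algebraMap_C, qinv_C, ftilde_C]
  · simp only [RingHom.comp_apply, RingHom.coe_coe, algebraMap_X, ftilde_X, qinv_X, map_inv₀]

lemma coe_ftilde (f : RatFunc F) :
    (ftilde F f : (RatFunc F)⸨X⸩) = LaurentSeries.mapRingHom C (f : F⸨X⸩) := by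
  suffices h : (algebraMap _ (RatFunc F)⸨X⸩).comp (ftilde F)
      = (LaurentSeries.mapRingHom C).comp (algebraMap (RatFunc F) F⸨X⸩) from
    DFunLike.congr_fun h f
  refine IsLocalization.ringHom_ext (nonZeroDivisors (Polynomial F)) (Polynomial.ringHom_ext ?_ ?_)
  · intro a
    ext n
    simp [ftilde_C, coe_C, HahnSeries.coeff_single, apply_ite C]
  · ext n
    simp [ftilde_X, HahnSeries.coeff_single, apply_ite C]

lemma le_orderTop_coe_ftilde {f : RatFunc F} {i : WithTop ℤ}
    (hf : ∀ n : ℤ, n < i → coeffL F n f = 0) : i ≤ (ftilde F f : (RatFunc F)⸨X⸩).orderTop :=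
  HahnSeries.le_orderTop_iff_forall.2 fun n hn => by
    rw [coe_ftilde, LaurentSeries.coeff_mapRingHom]
    exact (congrArg C (hf n hn)).trans (map_zero C)

def cauchyProj : RatFunc F →ₗ[F] RatFunc F where
  toFun f := cauchyResidue X (ftilde F f)
  map_add' f g := by rw [map_add, map_add]
  map_smul' a f := by
    rw [smul_eq_C_mul, map_mul, ftilde_C, ← smul_eq_C_mul, map_smul, smul_eq_C_mul]
    rfl

lemma cauchyProj_apply (f : RatFunc F) :
    cauchyProj F f = cauchyResidue X (ftilde F f) := rfl

lemma cauchyProj_eq_self_of_mem_KplusS {p : RatFunc F} (hp : p ∈ KplusS F) :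
    cauchyProj F p = p := by
  refine LinearMap.eqOn_span' (g := LinearMap.id) ?_ hp
  rintro _ ⟨n, rfl⟩
  rw [cauchyProj_apply, map_zpow₀, ftilde_X, cauchyResidue_zpow X_ne_zero]
  rfl

lemma cauchyProj_eq_zero_of_mem_KminusS {m : RatFunc F} (hm : m ∈ KminusS F) :
    cauchyProj F m = 0 := by
  obtain ⟨h₀, h_inf⟩ := hm
  refine cauchyResidue_eq_zero X_ne_zero (le_orderTop_coe_ftilde F ?_) ?_
  · exact fun n hn => h₀ n (by exact_mod_cast hn)
  · rw [qinv_ftilde]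
    exact le_orderTop_coe_ftilde F fun n hn =>
      h_inf n (Int.lt_add_one_iff.1 (by exact_mod_cast hn))

end PlusPart

/-- Cauchy residue formula for the projection `[·]₊`:
if `p` is the `K₊`-component of `f` (i.e. `p ∈ K₊` and `f − p ∈ K₋`), then
`p = −Res_{w=0}( f̃(w)/(w−q) dw ) − Res_{w=∞}( f̃(w)/(w−q) dw )`. -/
theorem plusPart_eq_residue (f p : RatFunc F)
    (hp : p ∈ KplusS F) (hfp : f - p ∈ KminusS F) :
    p = - res0 (RatFunc F) (ftilde F f / (RatFunc.X - RatFunc.C (RatFunc.X (K := F))))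
        - resInf (RatFunc F) (ftilde F f / (RatFunc.X - RatFunc.C (RatFunc.X (K := F)))) := by
  have h := cauchyProj_eq_zero_of_mem_KminusS F hfp
  rw [map_sub, cauchyProj_eq_self_of_mem_KplusS F hp, sub_eq_zero] at h
  exact h.symm

end
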